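/- arXiv:1701.06370 — 3 statements merged into one kernel-verified Lean document; each statement's English description precedes it below -/
import Mathlib

section
/- For a spherically symmetric hydrostatic equilibrium with polytropic equation of state P = Aρ^γ (A > 0, γ > 1), the total energy E = ∫₀^R (P/(γ−1)) 4πr² dr + ½ ∫₀^R ρ Φ 4πr² dr equals ((4−3γ)/(γ−1)) ∫₀^R P 4πr² dr; in particular E = 0 when γ = 4/3. -/
/-!
Integrating by parts against `r³` and using `P(R) = 0` gives the virial identity
`∫₀^R P' r³ dr = -3 ∫₀^R P r² dr`, and the hydrostatic equation turns its left side into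
`-G ∫₀^R ρ m r dr`. The shell formula `Φ(r) = -G m(r)/r - 4πG ∫_r^R ρ s ds`, followed by a
second integration by parts, shows that the potential energy `½ ∫ ρ Φ 4πr² dr` is the same
quantity `-4πG ∫₀^R ρ m r dr`. Hence `E = (1/(γ-1) - 3) ∫₀^R P 4πr² dr`.
-/

open MeasureTheory Real Set

theorem integral_deriv_mul_pow_succ {f : ℝ → ℝ} (hf : ContDiff ℝ 1 f) (a b : ℝ) (n : ℕ) :
    ∫ x in a..b, deriv f x * x ^ (n + 1) =
      f b * b ^ (n + 1) - f a * a ^ (n + 1) - (n + 1) * ∫ x in a..b, f x * x ^ n := by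
  have hpow : ∀ x : ℝ, HasDerivAt (fun x => x ^ (n + 1)) ((n + 1) * x ^ n) x := fun x => by
    simpa using hasDerivAt_pow (n + 1) x
  have hparts := intervalIntegral.integral_mul_deriv_eq_deriv_mul
    (fun x _ => (hf.differentiable one_ne_zero x).hasDerivAt) (fun x _ => hpow x)
    ((hf.continuous_deriv le_rfl).intervalIntegrable a b)
    ((by fun_prop : Continuous fun x : ℝ => ((n : ℝ) + 1) * x ^ n).intervalIntegrable a b)
  rw [← intervalIntegral.integral_const_mul]
  simp only [mul_left_comm _ ((n : ℝ) + 1)] at hparts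
  linarith

/-- Both sides are the integral of `f x * g y` over the triangle `a ≤ x ≤ y ≤ b`. -/
theorem integral_mul_integral_swap {f g : ℝ → ℝ} (hf : Continuous f) (hg : Continuous g)
    (a b : ℝ) :
    ∫ x in a..b, f x * ∫ y in x..b, g y = ∫ x in a..b, g x * ∫ y in a..x, f y := by
  have hF : ∀ x, HasDerivAt (fun x => ∫ y in a..x, f y) (f x) x := fun x =>
    (hf.integral_hasStrictDerivAt a x).hasDerivAt
  have hG : ∀ x, HasDerivAt (fun x => ∫ y in x..b, g y) (-g x) x := fun x =>
    intervalIntegral.integral_hasDerivAt_left (hg.intervalIntegrable _ _)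
      (hg.stronglyMeasurableAtFilter _ _) hg.continuousAt
  have hparts := intervalIntegral.integral_mul_deriv_eq_deriv_mul (fun x _ => hF x)
    (fun x _ => hG x) (hf.intervalIntegrable a b) (hg.neg.intervalIntegrable a b)
  simp only [intervalIntegral.integral_same, mul_zero, zero_mul, sub_zero, mul_neg,
    intervalIntegral.integral_neg, zero_sub, neg_inj] at hparts
  simp only [mul_comm (g _), hparts]

theorem min_inv_mul_sq {r : ℝ} (hr : 0 < r) (s : ℝ) :
    min r⁻¹ s⁻¹ * s ^ 2 = min (s ^ 2 / r) s := by
  rcases eq_or_ne s 0 with rfl | hs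
  · simp
  rw [min_mul_of_nonneg _ _ (sq_nonneg s)]
  congr 1 <;> field_simp

/-- The Newton potential of the spherically symmetric density `ρ` is `-4πG • radialPotential ρ`. -/
noncomputable def radialPotential (ρ : ℝ → ℝ) (r : ℝ) : ℝ :=
  ∫ s in Ioi 0, min r⁻¹ s⁻¹ * ρ s * s ^ 2

theorem radialPotential_eq {ρ : ℝ → ℝ} (hρ : Continuous ρ) {R : ℝ}
    (hsupp : ∀ s, R ≤ s → ρ s = 0) {r : ℝ} (hr : 0 < r) (hrR : r ≤ R) :
    radialPotential ρ r = (∫ s in 0..r, ρ s * s ^ 2) / r + ∫ s in r..R, ρ s * s := by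
  have hkernel : (fun s => min r⁻¹ s⁻¹ * ρ s * s ^ 2) = fun s => min (s ^ 2 / r) s * ρ s := by
    ext s; rw [mul_right_comm, min_inv_mul_sq hr]
  have hvanish : ∀ s ∈ Ioi (0:ℝ) \ Ioc 0 R, min (s ^ 2 / r) s * ρ s = 0 := fun s hs => by
    rw [hsupp s (not_le.mp fun h => hs.2 ⟨hs.1, h⟩).le, mul_zero]
  have hcont : Continuous fun s => min (s ^ 2 / r) s * ρ s := by fun_prop
  rw [radialPotential, hkernel,
    setIntegral_eq_of_subset_of_forall_sdiff_eq_zero measurableSet_Ioi Ioc_subset_Ioi_self hvanish,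
    ← intervalIntegral.integral_of_le (hr.le.trans hrR),
    ← intervalIntegral.integral_add_adjacent_intervals (hcont.intervalIntegrable 0 r)
      (hcont.intervalIntegrable r R), ← intervalIntegral.integral_div]
  congr 1 <;> refine intervalIntegral.integral_congr fun s hs => ?_
  · rw [uIcc_of_le hr.le] at hs
    have : s ^ 2 / r ≤ s := by rw [div_le_iff₀ hr]; nlinarith [hs.1, hs.2]
    simp only [min_eq_left this]; ring
  · rw [uIcc_of_le hrR] at hs
    have : s ≤ s ^ 2 / r := by rw [le_div_iff₀ hr]; nlinarith [hs.1, hs.2]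
    simp only [min_eq_right this, mul_comm]

theorem integral_mul_radialPotential {ρ : ℝ → ℝ} (hρ : Continuous ρ) {R : ℝ} (hR : 0 ≤ R)
    (hsupp : ∀ s, R ≤ s → ρ s = 0) :
    ∫ r in 0..R, ρ r * radialPotential ρ r * r ^ 2 =
      2 * ∫ r in 0..R, ρ r * r * ∫ s in 0..r, ρ s * s ^ 2 := by
  have hpointwise : EqOn (fun r => ρ r * radialPotential ρ r * r ^ 2)
      (fun r => ρ r * r * (∫ s in 0..r, ρ s * s ^ 2) + ρ r * r ^ 2 * ∫ s in r..R, ρ s * s)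
      (uIcc 0 R) := fun r hr => by
    rw [uIcc_of_le hR] at hr
    rcases hr.1.eq_or_lt with rfl | hr0
    · simp
    simp only [radialPotential_eq hρ hsupp hr0 hr.2]
    field_simp
  have hinner : Continuous fun r => ∫ s in 0..r, ρ s * s ^ 2 :=
    intervalIntegral.continuous_primitive
      (fun _ _ => Continuous.intervalIntegrable (by fun_prop) _ _) 0
  have houter : Continuous fun r => ∫ s in r..R, ρ s * s := by
    simp only [intervalIntegral.integral_symm R]
    exact (intervalIntegral.continuous_primitive
      (fun _ _ => Continuous.intervalIntegrable (by fun_prop) _ _) R).neg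
  rw [intervalIntegral.integral_congr hpointwise,
    intervalIntegral.integral_add (Continuous.intervalIntegrable (by fun_prop) _ _)
      (Continuous.intervalIntegrable (by fun_prop) _ _),
    integral_mul_integral_swap (by fun_prop) (by fun_prop)]
  ring

theorem polytrope_energy_identity_general
    (G R A γ : ℝ) (hR : 0 < R) (hγ : 1 < γ)
    (ρ : ℝ → ℝ)
    (hρC1 : ContDiff ℝ 1 ρ)
    (hρsupp : ∀ r, R ≤ r → ρ r = 0)
    (m : ℝ → ℝ) (hm : ∀ r, m r = 4 * π * ∫ s in (0:ℝ)..r, ρ s * s ^ 2)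
    -- hydrostatic equation d(Aρ^γ)/dr = −G ρ m / r²
    (hhydro : ∀ r, 0 < r → deriv (fun s => A * ρ s ^ γ) r = -G * ρ r * m r / r ^ 2)
    -- Newton potential of the spherically symmetric density
    (Φ : ℝ → ℝ)
    (hΦ : ∀ r, Φ r = -(4 * π * G) * ∫ r' in Set.Ioi (0:ℝ), min r⁻¹ r'⁻¹ * ρ r' * r' ^ 2)
    (E : ℝ)
    (hE : E = (∫ r in (0:ℝ)..R, (A * ρ r ^ γ / (γ - 1)) * (4 * π * r ^ 2))
        + (1/2) * ∫ r in (0:ℝ)..R, ρ r * Φ r * (4 * π * r ^ 2)) :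
    E = ((4 - 3 * γ) / (γ - 1)) * ∫ r in (0:ℝ)..R, (A * ρ r ^ γ) * (4 * π * r ^ 2)
      ∧ (γ = 4/3 → E = 0) := by
  set P : ℝ → ℝ := fun s => A * ρ s ^ γ
  set I := ∫ r in 0..R, P r * r ^ 2
  set K := ∫ r in 0..R, ρ r * r * ∫ s in 0..r, ρ s * s ^ 2
  have hP : ContDiff ℝ 1 P := contDiff_const.mul (hρC1.rpow_const_of_le (by simpa using hγ.le))
  have hPR : P R = 0 := by simp [P, hρsupp R le_rfl, zero_rpow (by positivity : γ ≠ 0)]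
  have hvirial : ∫ r in 0..R, deriv P r * r ^ 3 = -3 * I := by
    rw [integral_deriv_mul_pow_succ hP 0 R 2, hPR]
    norm_num [I]
  have hhydrostatic : ∫ r in 0..R, deriv P r * r ^ 3 = -(4 * π * G) * K := by
    rw [← intervalIntegral.integral_const_mul]
    refine intervalIntegral.integral_congr fun r hr => ?_
    rcases (uIcc_of_le hR.le ▸ hr).1.eq_or_lt with rfl | hr0
    · simp
    simp only [hhydro r hr0, hm r]
    field_simp
  have hpotential : ∫ r in 0..R, ρ r * Φ r * (4 * π * r ^ 2) = -(32 * π ^ 2 * G) * K := by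
    have hintegrand : ∀ r, ρ r * Φ r * (4 * π * r ^ 2) =
        -(16 * π ^ 2 * G) * (ρ r * radialPotential ρ r * r ^ 2) := fun r => by
      rw [hΦ r, radialPotential]; ring
    simp only [hintegrand, intervalIntegral.integral_const_mul,
      integral_mul_radialPotential hρC1.continuous hR.le hρsupp]
    ring
  have hinternal :
      ∫ r in 0..R, A * ρ r ^ γ / (γ - 1) * (4 * π * r ^ 2) = 4 * π / (γ - 1) * I := by
    rw [← intervalIntegral.integral_const_mul]; congr 1; ext r; ring
  have hpressure : ∫ r in 0..R, A * ρ r ^ γ * (4 * π * r ^ 2) = 4 * π * I := by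
    rw [← intervalIntegral.integral_const_mul]; congr 1; ext r; ring
  have henergy : E = ((4 - 3 * γ) / (γ - 1)) * ∫ r in 0..R, A * ρ r ^ γ * (4 * π * r ^ 2) := by
    have hγ1 : γ - 1 ≠ 0 := (sub_pos.mpr hγ).ne'
    rw [hE, hinternal, hpotential, hpressure]
    field_simp
    linear_combination 8 * (γ - 1) * (hhydrostatic.symm.trans hvirial)
  exact ⟨henergy, fun h43 => by rw [henergy, h43]; norm_num⟩

/-- **Total energy of a polytropic spherically symmetric equilibrium.**
For a hydrostatic equilibrium with polytropic equation of state `P = Aρ^γ`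
(`A > 0`, `γ > 1`), the total energy
`E = ∫₀^R (P/(γ−1)) 4πr² dr + ½ ∫₀^R ρ Φ 4πr² dr`
equals `((4−3γ)/(γ−1)) ∫₀^R P 4πr² dr`; in particular `E = 0` when `γ = 4/3`. -/
theorem polytrope_energy_identity
    (G R A γ : ℝ) (hG : 0 < G) (hR : 0 < R) (hA : 0 < A) (hγ : 1 < γ)
    (ρ : ℝ → ℝ)
    (hρC1 : ContDiff ℝ 1 ρ) (hρnonneg : ∀ r, 0 ≤ ρ r)
    (hρsupp : ∀ r, R ≤ r → ρ r = 0)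
    (m : ℝ → ℝ) (hm : ∀ r, m r = 4 * π * ∫ s in (0:ℝ)..r, ρ s * s ^ 2)
    -- hydrostatic equation d(Aρ^γ)/dr = −G ρ m / r²
    (hhydro : ∀ r, 0 < r → deriv (fun s => A * ρ s ^ γ) r = -G * ρ r * m r / r ^ 2)
    -- Newton potential of the spherically symmetric density
    (Φ : ℝ → ℝ)
    (hΦ : ∀ r, Φ r = -(4 * π * G) * ∫ r' in Set.Ioi (0:ℝ), min r⁻¹ r'⁻¹ * ρ r' * r' ^ 2)
    (E : ℝ)
    (hE : E = (∫ r in (0:ℝ)..R, (A * ρ r ^ γ / (γ - 1)) * (4 * π * r ^ 2))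
        + (1/2) * ∫ r in (0:ℝ)..R, ρ r * Φ r * (4 * π * r ^ 2)) :
    E = ((4 - 3 * γ) / (γ - 1)) * ∫ r in (0:ℝ)..R, (A * ρ r ^ γ) * (4 * π * r ^ 2)
      ∧ (γ = 4/3 → E = 0) :=
  polytrope_energy_identity_general G R A γ hR hγ ρ hρC1 hρsupp m hm hhydro Φ hΦ E hE
end

section
/- (Lynden-Bell–Ostriker commutation formula.) Let u and ū be bounded C¹ velocity fields on [t₀,T)×ℝ³ with global flows φ and φ̄, let ξ be the Lebovitz displacement and ∆ the Lagrangian change operator. Then for any quantities Q, Q̄ ∈ C¹([t₀,T)×ℝ³), the identity ∆(DQ/Dt) = D̄(∆Q)/Dt holds on [t₀,T)×ℝ³, where DQ/Dt = ∂Q/∂t + Σₖ uᵏ ∂Q/∂xᵏ and D̄/Dt = ∂/∂t + Σₖ ūᵏ ∂/∂xᵏ, and ∆(DQ/Dt)(t,x) = (DQ/Dt)(t, x+ξ(t,x)) − (D̄Q̄/Dt)(t,x). -/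
/-!
Because `φ̄` is a flow of the C¹ field `ū`, uniqueness of solutions gives
`φ̄(t₀; τ, φ̄(τ; t, x)) = φ̄(t₀; t, x)` for `τ ∈ [t₀, T)`. Hence along the unperturbed trajectory
`y(τ) = φ̄(τ; t, x)` the displaced point `y(τ) + ξ(τ, y(τ)) = φ(τ; t₀, φ̄(t₀; t, x))` follows the
perturbed trajectory through `x + ξ(t, x)`. A material derivative is the time derivative along a
trajectory of its velocity field, so differentiating
`∆Q(τ, y(τ)) = Q(τ, φ(τ; t₀, φ̄(t₀; t, x))) - Q̄(τ, y(τ))` at `τ = t` gives the formula.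
-/

/-- The convective (material) derivative `DQ/Dt = ∂Q/∂t + Σₖ uᵏ ∂Q/∂xᵏ`
associated with a velocity field `u`. -/
noncomputable def matD (u : ℝ → (Fin 3 → ℝ) → (Fin 3 → ℝ))
    (Q : ℝ → (Fin 3 → ℝ) → ℝ) (t : ℝ) (x : Fin 3 → ℝ) : ℝ :=
  deriv (fun s => Q s x) t
    + ∑ k, u t x k * fderiv ℝ (fun y => Q t y) x (Pi.single k 1)

open Set

section Uniqueness

variable {E : Type*} [NormedAddCommGroup E] [NormedSpace ℝ E]

theorem ODE_solution_unique_of_mem_Icc_left_of_contDiff {v : ℝ → E → E}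
    (hv : ContDiff ℝ 1 (fun q : ℝ × E => v q.1 q.2)) {f g : ℝ → E} {a b : ℝ}
    (hf : ContinuousOn f (Icc a b))
    (hf' : ∀ t ∈ Ioc a b, HasDerivWithinAt f (v t (f t)) (Iic t) t)
    (hg : ContinuousOn g (Icc a b))
    (hg' : ∀ t ∈ Ioc a b, HasDerivWithinAt g (v t (g t)) (Iic t) t)
    (hb : f b = g b) : EqOn f g (Icc a b) := by
  -- Lipschitz bounds are only needed between `f t` and `g t`, i.e. on the two (compact) graphs.
  have hgraphs : IsCompact ((fun t => (t, f t)) '' Icc a b ∪ (fun t => (t, g t)) '' Icc a b) :=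
    (isCompact_Icc.image_of_continuousOn (continuousOn_id.prodMk hf)).union
      (isCompact_Icc.image_of_continuousOn (continuousOn_id.prodMk hg))
  obtain ⟨K, hK⟩ := hv.locallyLipschitz.locallyLipschitzOn.exists_lipschitzOnWith_of_compact hgraphs
  have hslice : ∀ t ∈ Ioc a b, LipschitzOnWith K (v t) {f t, g t} := by
    intro t ht
    have hmaps : MapsTo (Prod.mk t) {f t, g t}
        ((fun t => (t, f t)) '' Icc a b ∪ (fun t => (t, g t)) '' Icc a b) := by
      rintro y (rfl | rfl)
      exacts [Or.inl ⟨t, Ioc_subset_Icc_self ht, rfl⟩, Or.inr ⟨t, Ioc_subset_Icc_self ht, rfl⟩]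
    have h := hK.comp (LipschitzWith.prodMk_left t).lipschitzOnWith hmaps
    rwa [mul_one] at h
  exact ODE_solution_unique_of_mem_Icc_left hslice hf hf' (fun t _ => by simp) hg hg'
    (fun t _ => by simp) hb

theorem flow_flow_eq_of_le {v : ℝ → E → E} (hv : ContDiff ℝ 1 (fun q : ℝ × E => v q.1 q.2))
    {φ : ℝ → ℝ → E → E} {I : Set ℝ} [I.OrdConnected]
    (hode : ∀ s ∈ I, ∀ y, ∀ t ∈ I, HasDerivAt (fun τ => φ τ s y) (v t (φ t s y)) t)
    (hinit : ∀ s ∈ I, ∀ y, φ s s y = y) {s τ t : ℝ} (hs : s ∈ I) (hτ : τ ∈ I) (ht : t ∈ I)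
    (hsτ : s ≤ τ) (x : E) :
    φ s τ (φ τ t x) = φ s t x := by
  have hIcc : Icc s τ ⊆ I := I.Icc_subset hs hτ
  have hcont : ∀ r ∈ I, ∀ y, ContinuousOn (fun σ => φ σ r y) (Icc s τ) := fun r hr y σ hσ =>
    (hode r hr y σ (hIcc hσ)).continuousAt.continuousWithinAt
  have hderiv : ∀ r ∈ I, ∀ y, ∀ σ ∈ Ioc s τ,
      HasDerivWithinAt (fun σ => φ σ r y) (v σ (φ σ r y)) (Iic σ) σ := fun r hr y σ hσ =>
    (hode r hr y σ (hIcc (Ioc_subset_Icc_self hσ))).hasDerivWithinAt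
  exact ODE_solution_unique_of_mem_Icc_left_of_contDiff hv (hcont τ hτ _) (hderiv τ hτ _)
    (hcont t ht x) (hderiv t ht x) (hinit τ hτ _) ⟨le_rfl, hsτ⟩

end Uniqueness

section MaterialDerivative

variable {v : ℝ → (Fin 3 → ℝ) → (Fin 3 → ℝ)} {f : ℝ → (Fin 3 → ℝ) → ℝ} {t : ℝ}

theorem matD_eq_fderiv {x : Fin 3 → ℝ}
    (hf : DifferentiableAt ℝ (fun q : ℝ × (Fin 3 → ℝ) => f q.1 q.2) (t, x)) :
    matD v f t x = fderiv ℝ (fun q : ℝ × (Fin 3 → ℝ) => f q.1 q.2) (t, x) (1, v t x) := by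
  set D := fderiv ℝ (fun q : ℝ × (Fin 3 → ℝ) => f q.1 q.2) (t, x)
  set L := D.comp (ContinuousLinearMap.inr ℝ ℝ (Fin 3 → ℝ))
  have htime : HasDerivAt (fun s => f s x) (D (1, 0)) t := by
    exact hf.hasFDerivAt.comp_hasDerivAt t ((hasDerivAt_id t).prodMk (hasDerivAt_const t x))
  have hspace : HasFDerivAt (fun y => f t y) L x :=
    hf.hasFDerivAt.comp x (hasFDerivAt_prodMk_right t x)
  have hsum : ∑ k, v t x k * L (Pi.single k 1) = L (v t x) := by
    conv_rhs => rw [← (Pi.basisFun ℝ (Fin 3)).sum_repr (v t x), map_sum]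
    simp
  rw [matD, htime.deriv, hspace.fderiv, hsum, ContinuousLinearMap.comp_apply,
    ContinuousLinearMap.inr_apply, ← map_add, Prod.mk_add_mk, add_zero, zero_add]

theorem hasDerivAt_matD_of_hasDerivAt {c : ℝ → Fin 3 → ℝ}
    (hf : DifferentiableAt ℝ (fun q : ℝ × (Fin 3 → ℝ) => f q.1 q.2) (t, c t))
    (hc : HasDerivAt c (v t (c t)) t) :
    HasDerivAt (fun τ => f τ (c τ)) (matD v f t (c t)) t := by
  rw [matD_eq_fderiv hf]
  exact hf.hasFDerivAt.comp_hasDerivAt t ((hasDerivAt_id t).prodMk hc)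

end MaterialDerivative

theorem lynden_bell_ostriker_commutation_general
    (t₀ T : ℝ)
    (u ubar : ℝ → (Fin 3 → ℝ) → (Fin 3 → ℝ))
    (hubarC1 : ContDiff ℝ 1 (fun q : ℝ × (Fin 3 → ℝ) => ubar q.1 q.2))
    (φ φbar : ℝ → ℝ → (Fin 3 → ℝ) → (Fin 3 → ℝ))
    -- the flows are C¹ in all variables
    (hφC1 : ContDiff ℝ 1 (fun q : ℝ × ℝ × (Fin 3 → ℝ) => φ q.1 q.2.1 q.2.2))
    (hφbarC1 : ContDiff ℝ 1 (fun q : ℝ × ℝ × (Fin 3 → ℝ) => φbar q.1 q.2.1 q.2.2))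
    -- flow equations and initial conditions
    (hφode : ∀ s ∈ Set.Ico t₀ T, ∀ y, ∀ t ∈ Set.Ico t₀ T,
      HasDerivAt (fun τ => φ τ s y) (u t (φ t s y)) t)
    (hφbarode : ∀ s ∈ Set.Ico t₀ T, ∀ y, ∀ t ∈ Set.Ico t₀ T,
      HasDerivAt (fun τ => φbar τ s y) (ubar t (φbar t s y)) t)
    (hφbarinit : ∀ s ∈ Set.Ico t₀ T, ∀ y, φbar s s y = y)
    -- the Lebovitz displacement
    (ξ : ℝ → (Fin 3 → ℝ) → (Fin 3 → ℝ))
    (hξ : ∀ t x, ξ t x = φ t t₀ (φbar t₀ t x) - x)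
    -- the perturbed and unperturbed quantities
    (Q Qbar : ℝ → (Fin 3 → ℝ) → ℝ)
    (hQ : ContDiff ℝ 1 (fun q : ℝ × (Fin 3 → ℝ) => Q q.1 q.2))
    (hQbar : ContDiff ℝ 1 (fun q : ℝ × (Fin 3 → ℝ) => Qbar q.1 q.2)) :
    ∀ t ∈ Set.Ico t₀ T, ∀ x,
      matD u Q t (x + ξ t x) - matD ubar Qbar t x
        = matD ubar (fun s y => Q s (y + ξ s y) - Qbar s y) t x := by
  intro t ht x
  have ht₀ : t₀ ∈ Ico t₀ T := ⟨le_rfl, ht.1.trans_lt ht.2⟩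
  have hdisplaced : ∀ s y, y + ξ s y = φ s t₀ (φbar t₀ s y) := fun s y => by
    rw [hξ]; abel
  have hΔQ : ContDiff ℝ 1 (fun q : ℝ × (Fin 3 → ℝ) => Q q.1 (q.2 + ξ q.1 q.2) - Qbar q.1 q.2) := by
    have hcarried : ContDiff ℝ 1 (fun q : ℝ × (Fin 3 → ℝ) => φ q.1 t₀ (φbar t₀ q.1 q.2)) :=
      hφC1.comp (contDiff_fst.prodMk (contDiff_const.prodMk
        (hφbarC1.comp (contDiff_const.prodMk (contDiff_fst.prodMk contDiff_snd)))))
    simp only [hdisplaced]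
    exact (hQ.comp (contDiff_fst.prodMk hcarried)).sub hQbar
  have hbar : HasDerivAt (fun τ => φbar τ t x) (ubar t (φbar t t x)) t := hφbarode t ht x t ht
  have hpert := hasDerivAt_matD_of_hasDerivAt (hQ.differentiable one_ne_zero _)
    (hφode t₀ ht₀ (φbar t₀ t x) t ht)
  have hunpert := hasDerivAt_matD_of_hasDerivAt (hQbar.differentiable one_ne_zero _) hbar
  have hΔ := hasDerivAt_matD_of_hasDerivAt (f := fun s y => Q s (y + ξ s y) - Qbar s y)
    (hΔQ.differentiable one_ne_zero _) hbar
  rw [hφbarinit t ht x] at hunpert hΔ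
  have hΔ_eq : EqOn (fun τ => Q τ (φ τ t₀ (φbar t₀ t x)) - Qbar τ (φbar τ t x))
      (fun τ => Q τ (φbar τ t x + ξ τ (φbar τ t x)) - Qbar τ (φbar τ t x)) (Ico t₀ T) :=
    fun τ hτ => by
      simp only [hdisplaced, flow_flow_eq_of_le hubarC1 hφbarode hφbarinit ht₀ hτ ht hτ.1]
  rw [hdisplaced]
  exact (uniqueDiffOn_Ico t₀ T t ht).eq_deriv _ (hpert.sub hunpert).hasDerivWithinAt
    (hΔ.hasDerivWithinAt.congr hΔ_eq (hΔ_eq ht))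

/-- **The Lynden-Bell–Ostriker commutation formula** `∆(DQ/Dt) = D̄(∆Q)/Dt`.
Here `φ`, `φbar` are the global flows of the perturbed and unperturbed bounded C¹
velocity fields `u`, `ubar`; `ξ(t,x) = φ(t;t₀,φ̄(t₀;t,x)) − x` is the Lebovitz
displacement, and `∆Q(t,x) = Q(t,x+ξ(t,x)) − Q̄(t,x)` the Lagrangian change. -/
theorem lynden_bell_ostriker_commutation
    (t₀ T : ℝ) (ht : t₀ < T)
    (u ubar : ℝ → (Fin 3 → ℝ) → (Fin 3 → ℝ))
    (huC1 : ContDiff ℝ 1 (fun q : ℝ × (Fin 3 → ℝ) => u q.1 q.2))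
    (hubarC1 : ContDiff ℝ 1 (fun q : ℝ × (Fin 3 → ℝ) => ubar q.1 q.2))
    (hubd : ∃ C, ∀ t ∈ Set.Ico t₀ T, ∀ x, ‖u t x‖ ≤ C)
    (hubarbd : ∃ C, ∀ t ∈ Set.Ico t₀ T, ∀ x, ‖ubar t x‖ ≤ C)
    (φ φbar : ℝ → ℝ → (Fin 3 → ℝ) → (Fin 3 → ℝ))
    -- the flows are C¹ in all variables
    (hφC1 : ContDiff ℝ 1 (fun q : ℝ × ℝ × (Fin 3 → ℝ) => φ q.1 q.2.1 q.2.2))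
    (hφbarC1 : ContDiff ℝ 1 (fun q : ℝ × ℝ × (Fin 3 → ℝ) => φbar q.1 q.2.1 q.2.2))
    -- flow equations and initial conditions
    (hφode : ∀ s ∈ Set.Ico t₀ T, ∀ y, ∀ t ∈ Set.Ico t₀ T,
      HasDerivAt (fun τ => φ τ s y) (u t (φ t s y)) t)
    (hφinit : ∀ s ∈ Set.Ico t₀ T, ∀ y, φ s s y = y)
    (hφbarode : ∀ s ∈ Set.Ico t₀ T, ∀ y, ∀ t ∈ Set.Ico t₀ T,
      HasDerivAt (fun τ => φbar τ s y) (ubar t (φbar t s y)) t)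
    (hφbarinit : ∀ s ∈ Set.Ico t₀ T, ∀ y, φbar s s y = y)
    -- the Lebovitz displacement
    (ξ : ℝ → (Fin 3 → ℝ) → (Fin 3 → ℝ))
    (hξ : ∀ t x, ξ t x = φ t t₀ (φbar t₀ t x) - x)
    -- the perturbed and unperturbed quantities
    (Q Qbar : ℝ → (Fin 3 → ℝ) → ℝ)
    (hQ : ContDiff ℝ 1 (fun q : ℝ × (Fin 3 → ℝ) => Q q.1 q.2))
    (hQbar : ContDiff ℝ 1 (fun q : ℝ × (Fin 3 → ℝ) => Qbar q.1 q.2)) :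
    ∀ t ∈ Set.Ico t₀ T, ∀ x,
      matD u Q t (x + ξ t x) - matD ubar Qbar t x
        = matD ubar (fun s y => Q s (y + ξ s y) - Qbar s y) t x :=
  lynden_bell_ostriker_commutation_general t₀ T u ubar hubarC1 φ φbar hφC1 hφbarC1 hφode hφbarode
    hφbarinit ξ hξ Q Qbar hQ hQbar
end

section
/- For a barotropic stationary axisymmetric configuration, the angular velocity is independent of z: if on an open connected set D ⊂ {(ϖ,z) : ϖ > 0} the functions u, Φ ∈ C²(D) and Ω ∈ C¹(D) satisfy −ϖΩ² + ∂u/∂ϖ = −∂Φ/∂ϖ and ∂u/∂z = −∂Φ/∂z, then ∂(ϖΩ²)/∂z = 0 on D; in particular Ω² is constant along every vertical segment contained in D. -/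
/-!
Adding the two equations, `u + Φ` has gradient `(ϖΩ², 0)` on `D`. So `ϖΩ² = ∂_ϖ(u + Φ)` near
every point of `D`, and by the symmetry of second derivatives of the `C²` function `u + Φ`,
`∂_z(ϖΩ²) = ∂_ϖ ∂_z(u + Φ) = 0`. Along a vertical segment `ϖΩ²` is therefore constant, and the
factor `ϖ > 0` cancels.
-/

open Filter Topology

section SecondDerivative

variable {E F : Type*} [NormedAddCommGroup E] [NormedSpace ℝ E]
  [NormedAddCommGroup F] [NormedSpace ℝ F] {f : E → F} {x : E}

theorem ContDiffAt.differentiableAt_fderiv_apply (hf : ContDiffAt ℝ 2 f x) (v : E) :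
    DifferentiableAt ℝ (fun y => fderiv ℝ f y v) x :=
  ((hf.fderiv_right (m := 1) le_rfl).differentiableAt one_ne_zero).clm_apply
    (differentiableAt_const v)

theorem ContDiffAt.fderiv_fderiv_apply_comm (hf : ContDiffAt ℝ 2 f x) (v w : E) :
    fderiv ℝ (fun y => fderiv ℝ f y v) x w = fderiv ℝ (fun y => fderiv ℝ f y w) x v := by
  have hf' := (hf.fderiv_right (m := 1) le_rfl).differentiableAt one_ne_zero
  rw [fderiv_clm_apply hf' (differentiableAt_const v),
    fderiv_clm_apply hf' (differentiableAt_const w)]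
  simpa using (hf.isSymmSndFDerivAt (by simp)).eq w v

theorem ContDiffAt.fderiv_fderiv_apply_eq_zero (hf : ContDiffAt ℝ 2 f x) (v : E) {w : E}
    (hw : (fun y => fderiv ℝ f y w) =ᶠ[𝓝 x] fun _ => 0) :
    fderiv ℝ (fun y => fderiv ℝ f y v) x w = 0 := by
  rw [hf.fderiv_fderiv_apply_comm, hw.fderiv_eq]
  simp

end SecondDerivative

section MeanValue

variable {E G : Type*} [NormedAddCommGroup E] [NormedSpace ℝ E]
  [NormedAddCommGroup G] [NormedSpace ℝ G]

theorem eq_of_fderiv_apply_sub_eq_zero_on_segment {f : E → G} {x y : E}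
    (hf : ∀ z ∈ segment ℝ x y, DifferentiableAt ℝ f z)
    (h : ∀ z ∈ segment ℝ x y, fderiv ℝ f z (y - x) = 0) : f x = f y := by
  set g : ℝ → E := ⇑(AffineMap.lineMap x y : ℝ →ᵃ[ℝ] E)
  have hg : ∀ t ∈ Set.Icc (0 : ℝ) 1, g t ∈ segment ℝ x y := fun t ht => by
    rw [segment_eq_image_lineMap]; exact ⟨t, ht, rfl⟩
  have hderiv : ∀ t ∈ Set.Icc (0 : ℝ) 1, HasDerivAt (f ∘ g) 0 t := fun t ht => by
    simpa [h _ (hg t ht)] using (hf _ (hg t ht)).hasFDerivAt.comp_hasDerivAt t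
      (AffineMap.hasDerivAt_lineMap (a := x) (b := y))
  have hconst := constant_of_has_deriv_right_zero
    (fun t ht => (hderiv t ht).continuousAt.continuousWithinAt)
    (fun t ht => (hderiv t (Set.Ico_subset_Icc_self ht)).hasDerivWithinAt) 1 (by simp)
  simpa [g] using hconst.symm

end MeanValue

theorem angular_velocity_independent_of_z_general
    (D : Set (ℝ × ℝ)) (hDopen : IsOpen D)
    (hDpos : ∀ p ∈ D, 0 < p.1)
    (u Φ Ω : ℝ × ℝ → ℝ)
    (hu : ContDiffOn ℝ 2 u D) (hΦ : ContDiffOn ℝ 2 Φ D)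
    (heq1 : ∀ p ∈ D, -(p.1) * (Ω p) ^ 2 + fderiv ℝ u p (1, 0) = -fderiv ℝ Φ p (1, 0))
    (heq2 : ∀ p ∈ D, fderiv ℝ u p (0, 1) = -fderiv ℝ Φ p (0, 1)) :
    (∀ p ∈ D, fderiv ℝ (fun q : ℝ × ℝ => q.1 * (Ω q) ^ 2) p (0, 1) = 0)
    ∧ ∀ p ∈ D, ∀ q ∈ D, p.1 = q.1 → segment ℝ p q ⊆ D → (Ω p) ^ 2 = (Ω q) ^ 2 := by
  set F : ℝ × ℝ → ℝ := fun q => q.1 * Ω q ^ 2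
  have hf : ∀ p ∈ D, ContDiffAt ℝ 2 (u + Φ) p := fun p hp =>
    (hu.add hΦ).contDiffAt (hDopen.mem_nhds hp)
  have hgrad : ∀ p ∈ D, fderiv ℝ (u + Φ) p (1, 0) = F p ∧ fderiv ℝ (u + Φ) p (0, 1) = 0 := by
    intro p hp
    have hdiff {g : ℝ × ℝ → ℝ} (hg : ContDiffOn ℝ 2 g D) : DifferentiableAt ℝ g p :=
      (hg.contDiffAt (hDopen.mem_nhds hp)).differentiableAt two_ne_zero
    rw [fderiv_add (hdiff hu) (hdiff hΦ)]
    constructor <;> simp only [add_apply, F] <;> linarith [heq1 p hp, heq2 p hp]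
  have hF : ∀ p ∈ D, F =ᶠ[𝓝 p] fun q => fderiv ℝ (u + Φ) q (1, 0) := fun p hp => by
    filter_upwards [hDopen.mem_nhds hp] with q hq using (hgrad q hq).1.symm
  have hFz : ∀ p ∈ D, fderiv ℝ F p (0, 1) = 0 := fun p hp => by
    rw [(hF p hp).fderiv_eq]
    refine (hf p hp).fderiv_fderiv_apply_eq_zero _ ?_
    filter_upwards [hDopen.mem_nhds hp] with q hq using (hgrad q hq).2
  refine ⟨hFz, fun p hp q hq hpq hseg => ?_⟩
  have hvert : q - p = (q.2 - p.2) • ((0 : ℝ), (1 : ℝ)) := by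
    ext <;> simp [hpq]
  have hFpq : F p = F q := eq_of_fderiv_apply_sub_eq_zero_on_segment
    (fun r hr => ((hf r (hseg hr)).differentiableAt_fderiv_apply _).congr_of_eventuallyEq
      (hF r (hseg hr)))
    (fun r hr => by rw [hvert, map_smul, hFz r (hseg hr), smul_zero])
  simp only [F, hpq] at hFpq
  exact mul_left_cancel₀ (hDpos q hq).ne' hFpq

/-- **For a barotropic stationary axisymmetric configuration the angular velocity
is independent of `z`:** if `−ϖΩ² + ∂u/∂ϖ = −∂Φ/∂ϖ` and `∂u/∂z = −∂Φ/∂z` on an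
open connected set `D ⊆ {ϖ > 0}` with `u, Φ ∈ C²(D)` and `Ω ∈ C¹(D)`, then
`∂(ϖΩ²)/∂z = 0` on `D`; in particular `Ω²` is constant along every vertical
segment contained in `D`. (A point `p : ℝ × ℝ` is `p = (ϖ, z)`.) -/
theorem angular_velocity_independent_of_z
    (D : Set (ℝ × ℝ)) (hDopen : IsOpen D) (hDconn : IsConnected D)
    (hDpos : ∀ p ∈ D, 0 < p.1)
    (u Φ Ω : ℝ × ℝ → ℝ)
    (hu : ContDiffOn ℝ 2 u D) (hΦ : ContDiffOn ℝ 2 Φ D)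
    (hΩ : ContDiffOn ℝ 1 Ω D)
    (heq1 : ∀ p ∈ D, -(p.1) * (Ω p) ^ 2 + fderiv ℝ u p (1, 0) = -fderiv ℝ Φ p (1, 0))
    (heq2 : ∀ p ∈ D, fderiv ℝ u p (0, 1) = -fderiv ℝ Φ p (0, 1)) :
    (∀ p ∈ D, fderiv ℝ (fun q : ℝ × ℝ => q.1 * (Ω q) ^ 2) p (0, 1) = 0)
    ∧ ∀ p ∈ D, ∀ q ∈ D, p.1 = q.1 → segment ℝ p q ⊆ D → (Ω p) ^ 2 = (Ω q) ^ 2 :=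
  angular_velocity_independent_of_z_general D hDopen hDpos u Φ Ω hu hΦ heq1 heq2
end
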